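/- arXiv:2311.03070 — 2 statements merged into one kernel-verified Lean document; each statement's English description precedes it below -/
import Mathlib

section
/- Let K ⊂ ℝ^d be a convex body, φ : K → [0,∞) continuous, and suppose additionally that φ is strictly positive on an open neighborhood of the boundary ∂K. Then the weighted floating body K_δ^φ equals the closed superlevel set {x ∈ K : mcd_{K,φ}(x) ≥ δ} of the minimal cap density function. -/
open MeasureTheory
open scoped RealInnerProductSpace

/-- The `φ`-weighted floating body `K_δ^φ`. -/
noncomputable def weightedFloatingBody {d : ℕ} (K : Set (EuclideanSpace ℝ (Fin d)))
    (φ : EuclideanSpace ℝ (Fin d) → ℝ) (δ : ℝ) : Set (EuclideanSpace ℝ (Fin d)) :=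
  ⋂ (u : EuclideanSpace ℝ (Fin d)) (_ : ‖u‖ = 1) (t : ℝ)
    (_ : ∫ y in K ∩ {y | t ≤ ⟪y, u⟫}, φ y ≤ δ), {y | ⟪y, u⟫ ≤ t}

/-- The minimal cap density of `K` with respect to `φ`. -/
noncomputable def minimalCapDensity {d : ℕ} (K : Set (EuclideanSpace ℝ (Fin d)))
    (φ : EuclideanSpace ℝ (Fin d) → ℝ) (x : EuclideanSpace ℝ (Fin d)) : ℝ :=
  ⨅ u : Metric.sphere (0 : EuclideanSpace ℝ (Fin d)) 1,
    ∫ y in K ∩ {y | ⟪x, (u : EuclideanSpace ℝ (Fin d))⟫ ≤ ⟪y, (u : EuclideanSpace ℝ (Fin d))⟫}, φ y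

/-!
If `x` lies in the floating body, a hyperplane separating `x` from `K` cuts off an empty cap,
so `x ∈ K`; and a cap at `x` of weight `< δ` would, by continuity from above of the integral,
stay of weight `< δ` after a slight enlargement, which pushes `x` out of the floating body.

Conversely, let `x ∈ K` have all caps of weight `≥ δ` and suppose `⟪x, u⟫ > t` although the cap
`t ≤ ⟪·, u⟫` has weight `≤ δ`. Then the slab `t ≤ ⟪·, u⟫ < ⟪x, u⟫` has weight `0`. If `x`
minimises `⟪·, u⟫` on `K`, the opposite cap at `x` lies in a hyperplane and has weight
`0 < δ`. Otherwise the slab meets `K`, and as `d ≥ 2` it meets `∂K`, hence an open set of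
interior points near `∂K`, where `φ > 0`: the slab has positive weight.
-/

open Set Filter Bornology Module

section SetIntegral

variable {X : Type*} [MeasurableSpace X] {μ : Measure X} {K V : Set X} {φ g : X → ℝ}
  {s t δ : ℝ}

theorem exists_lt_setIntegral_inter_le_lt (hg : Measurable g) (hK : MeasurableSet K)
    (hφ : IntegrableOn φ K μ) (h : ∫ y in K ∩ {y | s ≤ g y}, φ y ∂μ < δ) :
    ∃ t < s, ∫ y in K ∩ {y | t ≤ g y}, φ y ∂μ < δ := by
  set S : ℕ → Set X := fun n => K ∩ {y | s - 1 / (n + 1) ≤ g y}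
  have hS_anti : Antitone S := fun m n hmn y ⟨hyK, hy⟩ =>
    ⟨hyK, le_trans (sub_le_sub_left (Nat.one_div_le_one_div hmn) s) hy⟩
  have hS_iInter : ⋂ n, S n = K ∩ {y | s ≤ g y} := by
    ext y
    simp only [S, mem_iInter, mem_inter_iff, mem_ofPred_eq]
    refine ⟨fun hy => ⟨(hy 0).1, ?_⟩, fun hy n => ⟨hy.1, ?_⟩⟩
    · have hlim :=
        tendsto_const_nhds (x := s).sub (tendsto_one_div_add_atTop_nhds_zero_nat (𝕜 := ℝ))
      rw [sub_zero] at hlim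
      exact le_of_tendsto' hlim fun n => (hy n).2
    · linarith [hy.2, Nat.one_div_pos_of_nat (α := ℝ) (n := n)]
  have hlim := tendsto_setIntegral_of_antitone (μ := μ) (f := φ)
    (fun n => hK.inter (measurableSet_le measurable_const hg)) hS_anti
    ⟨0, hφ.mono_set inter_subset_left⟩
  rw [hS_iInter] at hlim
  obtain ⟨n, hn⟩ := (hlim.eventually (gt_mem_nhds h)).exists
  exact ⟨s - 1 / (n + 1), sub_lt_self s Nat.one_div_pos_of_nat, hn⟩

theorem setIntegral_add_le_setIntegral_of_subset_slab
    (hVK : V ⊆ K ∩ {y | t ≤ g y ∧ g y < s}) (hts : t ≤ s) (hg : Measurable g)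
    (hK : MeasurableSet K) (hφ : IntegrableOn φ K μ) (hφ0 : ∀ y ∈ K, 0 ≤ φ y) :
    ∫ y in V, φ y ∂μ + ∫ y in K ∩ {y | s ≤ g y}, φ y ∂μ ≤ ∫ y in K ∩ {y | t ≤ g y}, φ y ∂μ := by
  have hdisj : Disjoint V (K ∩ {y | s ≤ g y}) :=
    disjoint_left.2 fun y hyV hy => (hVK hyV).2.2.not_ge hy.2
  rw [← setIntegral_union hdisj (hK.inter (measurableSet_le measurable_const hg))
    (hφ.mono_set (hVK.trans inter_subset_left)) (hφ.mono_set inter_subset_left)]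
  refine setIntegral_mono_set (hφ.mono_set inter_subset_left)
    (ae_restrict_of_forall_mem (hK.inter (measurableSet_le measurable_const hg))
      fun y hy => hφ0 y hy.1) (Eventually.of_forall ?_)
  rintro y (hy | ⟨hyK, hy⟩)
  · exact ⟨(hVK hy).1, (hVK hy).2.1⟩
  · exact ⟨hyK, hts.trans hy⟩

theorem IsOpen.setIntegral_pos [TopologicalSpace X] [OpensMeasurableSpace X]
    [μ.IsOpenPosMeasure] (hV : IsOpen V) (hVne : V.Nonempty) (hφ : ∀ y ∈ V, 0 < φ y)
    (hφi : IntegrableOn φ V μ) : 0 < ∫ y in V, φ y ∂μ := by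
  have hsupp : Function.support φ ∩ V = V := inter_eq_right.2 fun y hy => (hφ y hy).ne'
  rw [setIntegral_pos_iff_support_of_nonneg_ae
    (ae_restrict_of_forall_mem hV.measurableSet fun y hy => (hφ y hy).le) hφi, hsupp]
  exact hV.measure_pos μ hVne

end SetIntegral

section Geometry

variable {E : Type*} [NormedAddCommGroup E] [InnerProductSpace ℝ E]

theorem exists_ne_zero_inner_eq_zero [FiniteDimensional ℝ E] (hE : 2 ≤ finrank ℝ E) (u : E) :
    ∃ e ≠ 0, ⟪e, u⟫ = 0 := by
  have hker : LinearMap.ker (innerₛₗ ℝ u) ≠ ⊥ :=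
    LinearMap.ker_ne_bot_of_finrank_lt (by rw [finrank_self]; omega)
  obtain ⟨e, he, he0⟩ := (Submodule.ne_bot_iff _).1 hker
  exact ⟨e, he0, by rw [real_inner_comm]; exact he⟩

theorem Bornology.IsBounded.exists_add_smul_notMem {F : Type*} [NormedAddCommGroup F]
    [NormedSpace ℝ F] {K : Set F} (hK : IsBounded K) (w : F) {e : F} (he : e ≠ 0) :
    ∃ a : ℝ, w + a • e ∉ K := by
  obtain ⟨R, hR⟩ := hK.exists_norm_le
  refine ⟨(R + ‖w‖ + 1) / ‖e‖, fun hmem => ?_⟩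
  have hnorm : ‖((R + ‖w‖ + 1) / ‖e‖) • e‖ = |R + ‖w‖ + 1| := by
    rw [norm_smul, Real.norm_eq_abs, abs_div, abs_norm, div_mul_cancel₀ _ (norm_ne_zero_iff.2 he)]
  have htri := norm_sub_le (w + ((R + ‖w‖ + 1) / ‖e‖) • e) w
  rw [add_sub_cancel_left, hnorm] at htri
  linarith [hR _ hmem, le_abs_self (R + ‖w‖ + 1)]

theorem Bornology.IsBounded.exists_add_smul_mem_frontier {F : Type*} [NormedAddCommGroup F]
    [NormedSpace ℝ F] {K : Set F} (hK : IsBounded K) {w e : F} (hw : w ∈ K) (he : e ≠ 0) :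
    ∃ a : ℝ, w + a • e ∈ frontier K := by
  have hline : Continuous fun a : ℝ => w + a • e := by fun_prop
  obtain ⟨a, ha⟩ : (frontier ((fun a : ℝ => w + a • e) ⁻¹' K)).Nonempty := by
    refine nonempty_frontier_iff.2 ⟨⟨0, by simpa using hw⟩, fun huniv => ?_⟩
    obtain ⟨a, ha⟩ := hK.exists_add_smul_notMem w he
    exact ha (huniv ▸ mem_univ a : a ∈ (fun a : ℝ => w + a • e) ⁻¹' K)
  exact ⟨a, hline.frontier_preimage_subset K ha⟩

theorem exists_mem_frontier_inner_eq [FiniteDimensional ℝ E] (hE : 2 ≤ finrank ℝ E)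
    {K : Set E} (hK : IsBounded K) {w : E} (hw : w ∈ K) (u : E) :
    ∃ p ∈ frontier K, ⟪p, u⟫ = ⟪w, u⟫ := by
  obtain ⟨e, he0, heu⟩ := exists_ne_zero_inner_eq_zero hE u
  obtain ⟨a, ha⟩ := hK.exists_add_smul_mem_frontier hw he0
  exact ⟨_, ha, by rw [inner_add_left, real_inner_smul_left, heu, mul_zero, add_zero]⟩

theorem exists_mem_frontier_inner_mem_Ioo [FiniteDimensional ℝ E] (hE : 2 ≤ finrank ℝ E)
    {K : Set E} (hKb : IsBounded K) (hKc : IsPreconnected K) {x y u : E} {t : ℝ}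
    (hyK : y ∈ K) (hxK : x ∈ K) (hyx : ⟪y, u⟫ < ⟪x, u⟫) (ht : t < ⟪x, u⟫) :
    ∃ p ∈ frontier K, ⟪p, u⟫ ∈ Ioo t ⟪x, u⟫ := by
  obtain ⟨r, hr⟩ := exists_between (max_lt ht hyx)
  obtain ⟨w, hwK, hwr⟩ := hKc.intermediate_value hyK hxK
    (continuous_id.inner continuous_const).continuousOn
    ⟨(le_max_right _ _).trans hr.1.le, hr.2.le⟩
  obtain ⟨p, hp, hpw⟩ := exists_mem_frontier_inner_eq hE hKb hwK u
  rw [← hwr] at hr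
  exact ⟨p, hp, hpw ▸ (le_max_left _ _).trans_lt hr.1, hpw ▸ hr.2⟩

theorem Convex.inter_interior_inter_inner_mem_Ioo_nonempty [FiniteDimensional ℝ E]
    (hE : 2 ≤ finrank ℝ E) {K U : Set E} (hKb : IsBounded K) (hKconv : Convex ℝ K)
    (hKint : (interior K).Nonempty) (hU : IsOpen U) (hUK : frontier K ⊆ U) {x y u : E} {t : ℝ}
    (hyK : y ∈ K) (hxK : x ∈ K) (hyx : ⟪y, u⟫ < ⟪x, u⟫) (ht : t < ⟪x, u⟫) :
    (U ∩ interior K ∩ (fun z => ⟪z, u⟫) ⁻¹' Ioo t ⟪x, u⟫).Nonempty := by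
  obtain ⟨p, hp, hpu⟩ :=
    exists_mem_frontier_inner_mem_Ioo hE hKb hKconv.isPreconnected hyK hxK hyx ht
  have hp_cl : p ∈ closure (interior K) := by
    rw [hKconv.closure_interior_eq_closure_of_nonempty_interior hKint]
    exact frontier_subset_closure hp
  obtain ⟨z, ⟨hzU, hzu⟩, hzK⟩ := mem_closure_iff.1 hp_cl _
    (hU.inter (isOpen_Ioo.preimage (continuous_id.inner continuous_const))) ⟨hUK hp, hpu⟩
  exact ⟨z, ⟨hzU, hzK⟩, hzu⟩

theorem exists_norm_eq_one_inner_lt_of_notMem [CompleteSpace E] {K : Set E}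
    (hKconv : Convex ℝ K) (hKc : IsClosed K) (hKne : K.Nonempty) {x : E} (hx : x ∉ K) :
    ∃ u : E, ‖u‖ = 1 ∧ ∃ c, (∀ y ∈ K, ⟪y, u⟫ < c) ∧ c < ⟪x, u⟫ := by
  obtain ⟨f, c, hfK, hfx⟩ := geometric_hahn_banach_closed_point hKconv hKc hx
  set v := (InnerProductSpace.toDual ℝ E).symm f
  have hv : ∀ y, ⟪y, v⟫ = f y := fun y => by
    rw [real_inner_comm, InnerProductSpace.toDual_symm_apply]
  have hv0 : v ≠ 0 := by
    rintro hv0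
    obtain ⟨y, hy⟩ := hKne
    have hfy := hfK y hy
    rw [← hv, hv0, inner_zero_right] at hfy hfx
    linarith
  have hv_pos : 0 < ‖v‖⁻¹ := inv_pos.2 (norm_pos_iff.2 hv0)
  refine ⟨‖v‖⁻¹ • v, norm_smul_inv_norm hv0, ‖v‖⁻¹ * c, fun y hy => ?_, ?_⟩
  · rw [real_inner_smul_right, hv]
    exact mul_lt_mul_of_pos_left (hfK y hy) hv_pos
  · rw [real_inner_smul_right, hv]
    exact mul_lt_mul_of_pos_left hfx hv_pos

variable [MeasurableSpace E] [BorelSpace E] [FiniteDimensional ℝ E] (μ : Measure E)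
  [μ.IsAddHaarMeasure]

theorem addHaar_setOf_inner_eq {u : E} (hu : u ≠ 0) (c : ℝ) : μ {y | ⟪y, u⟫ = c} = 0 := by
  set y₀ : E := (c / ⟪u, u⟫) • u
  have hy₀ : ⟪u, y₀⟫ = c := by
    rw [real_inner_smul_right, div_mul_cancel₀ _ (inner_self_ne_zero.2 hu)]
  have hker : LinearMap.ker (innerₛₗ ℝ u) ≠ ⊤ := fun h =>
    inner_self_ne_zero.2 hu (LinearMap.mem_ker.1 (h ▸ Submodule.mem_top : u ∈ LinearMap.ker _))
  have hlevel : {y | ⟪y, u⟫ = c} = (fun y => y + -y₀) ⁻¹' LinearMap.ker (innerₛₗ ℝ u) := by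
    ext y
    rw [mem_preimage, ← sub_eq_add_neg, SetLike.mem_coe, LinearMap.mem_ker, innerₛₗ_apply_apply,
      inner_sub_right, hy₀, sub_eq_zero, mem_ofPred_eq, real_inner_comm]
  rw [hlevel, measure_preimage_add_right, Measure.addHaar_submodule μ _ hker]

variable {μ} {K U : Set E} {φ : E → ℝ} {x u : E}

theorem setIntegral_inter_inner_neg_le_eq_zero (hu : u ≠ 0) (hmin : ∀ y ∈ K, ⟪x, u⟫ ≤ ⟪y, u⟫) :
    ∫ y in K ∩ {y | ⟪x, -u⟫ ≤ ⟪y, -u⟫}, φ y ∂μ = 0 := by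
  have hnull : μ (K ∩ {y | ⟪x, -u⟫ ≤ ⟪y, -u⟫}) = 0 := by
    refine measure_mono_null (fun y ⟨hyK, hy⟩ => ?_) (addHaar_setOf_inner_eq μ hu ⟪x, u⟫)
    simp only [mem_ofPred_eq, inner_neg_right, neg_le_neg_iff] at hy ⊢
    exact le_antisymm hy (hmin y hyK)
  rw [Measure.restrict_eq_zero.2 hnull, integral_zero_measure]

theorem setIntegral_inter_le_inner_lt (hE : 2 ≤ finrank ℝ E) (hKb : IsBounded K)
    (hKm : MeasurableSet K) (hKconv : Convex ℝ K) (hKint : (interior K).Nonempty)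
    (hφ : IntegrableOn φ K μ) (hφ0 : ∀ y ∈ K, 0 ≤ φ y) (hU : IsOpen U)
    (hUK : frontier K ⊆ U) (hφU : ∀ y ∈ U ∩ K, 0 < φ y) {y : E} {t : ℝ}
    (hyK : y ∈ K) (hxK : x ∈ K) (hyx : ⟪y, u⟫ < ⟪x, u⟫) (ht : t < ⟪x, u⟫) :
    ∫ z in K ∩ {z | ⟪x, u⟫ ≤ ⟪z, u⟫}, φ z ∂μ < ∫ z in K ∩ {z | t ≤ ⟪z, u⟫}, φ z ∂μ := by
  set V := U ∩ interior K ∩ (fun z => ⟪z, u⟫) ⁻¹' Ioo t ⟪x, u⟫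
  have hV : IsOpen V :=
    (hU.inter isOpen_interior).inter (isOpen_Ioo.preimage (continuous_id.inner continuous_const))
  have hVK : V ⊆ K ∩ {z | t ≤ ⟪z, u⟫ ∧ ⟪z, u⟫ < ⟪x, u⟫} := fun z hz =>
    ⟨interior_subset hz.1.2, hz.2.1.le, hz.2.2⟩
  have hVpos : 0 < ∫ z in V, φ z ∂μ :=
    hV.setIntegral_pos (hKconv.inter_interior_inter_inner_mem_Ioo_nonempty hE hKb hKint hU hUK
      hyK hxK hyx ht) (fun z hz => hφU z ⟨hz.1.1, interior_subset hz.1.2⟩)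
      (hφ.mono_set (hVK.trans inter_subset_left))
  linarith [setIntegral_add_le_setIntegral_of_subset_slab hVK ht.le (by fun_prop) hKm hφ hφ0]

end Geometry

section FloatingBody

variable {d : ℕ} {K U : Set (EuclideanSpace ℝ (Fin d))} {φ : EuclideanSpace ℝ (Fin d) → ℝ}
  {δ : ℝ} {x : EuclideanSpace ℝ (Fin d)}

theorem mem_weightedFloatingBody : x ∈ weightedFloatingBody K φ δ ↔
    ∀ u, ‖u‖ = 1 → ∀ t : ℝ, ∫ y in K ∩ {y | t ≤ ⟪y, u⟫}, φ y ≤ δ → ⟪x, u⟫ ≤ t := by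
  simp [weightedFloatingBody]

theorem le_minimalCapDensity_iff [NeZero d] (hK : MeasurableSet K) (hφ0 : ∀ y ∈ K, 0 ≤ φ y) :
    δ ≤ minimalCapDensity K φ x ↔
      ∀ u, ‖u‖ = 1 → δ ≤ ∫ y in K ∩ {y | ⟪x, u⟫ ≤ ⟪y, u⟫}, φ y := by
  have : Nonempty (Metric.sphere (0 : EuclideanSpace ℝ (Fin d)) 1) :=
    (NormedSpace.sphere_nonempty.2 zero_le_one).to_subtype
  rw [minimalCapDensity, le_ciInf_iff]
  · simp
  · refine ⟨0, ?_⟩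
    rintro _ ⟨u, rfl⟩
    exact setIntegral_nonneg
      (hK.inter (measurableSet_le measurable_const (by fun_prop)))
      fun y hy => hφ0 y hy.1

theorem weightedFloatingBody_subset (hKc : IsClosed K) (hKconv : Convex ℝ K) (hKne : K.Nonempty)
    (hδ : 0 ≤ δ) : weightedFloatingBody K φ δ ⊆ K := by
  intro x hx
  by_contra hxK
  obtain ⟨u, hu, c, hKu, hcx⟩ := exists_norm_eq_one_inner_lt_of_notMem hKconv hKc hKne hxK
  have hcap : K ∩ {y | c ≤ ⟪y, u⟫} = ∅ :=
    eq_empty_of_forall_notMem fun y ⟨hyK, hy⟩ => (hKu y hyK).not_ge hy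
  refine hcx.not_ge (mem_weightedFloatingBody.1 hx u hu c ?_)
  rwa [hcap, Measure.restrict_empty, integral_zero_measure]

theorem weightedFloatingBody_subset_superlevel [NeZero d] (hKc : IsClosed K)
    (hKconv : Convex ℝ K) (hKne : K.Nonempty) (hφ : IntegrableOn φ K) (hφ0 : ∀ y ∈ K, 0 ≤ φ y)
    (hδ : 0 ≤ δ) : weightedFloatingBody K φ δ ⊆ {x ∈ K | δ ≤ minimalCapDensity K φ x} := by
  intro x hx
  refine ⟨weightedFloatingBody_subset hKc hKconv hKne hδ hx,
    (le_minimalCapDensity_iff hKc.measurableSet hφ0).2 fun u hu => ?_⟩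
  by_contra! hlt
  obtain ⟨t, hts, ht⟩ := exists_lt_setIntegral_inter_le_lt (by fun_prop) hKc.measurableSet hφ hlt
  exact hts.not_ge (mem_weightedFloatingBody.1 hx u hu t ht.le)

theorem superlevel_subset_weightedFloatingBody (hd : 2 ≤ d) (hKcomp : IsCompact K)
    (hKconv : Convex ℝ K) (hKint : (interior K).Nonempty) (hφ : IntegrableOn φ K)
    (hφ0 : ∀ y ∈ K, 0 ≤ φ y) (hU : IsOpen U) (hUK : frontier K ⊆ U)
    (hφU : ∀ y ∈ U ∩ K, 0 < φ y) (hδ : 0 < δ) :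
    {x ∈ K | δ ≤ minimalCapDensity K φ x} ⊆ weightedFloatingBody K φ δ := by
  have : NeZero d := ⟨by omega⟩
  have hE : 2 ≤ finrank ℝ (EuclideanSpace ℝ (Fin d)) := by rwa [finrank_euclideanSpace_fin]
  rintro x ⟨hxK, hx⟩
  have hcap := (le_minimalCapDensity_iff hKcomp.isClosed.measurableSet hφ0).1 hx
  refine mem_weightedFloatingBody.2 fun u hu t ht => ?_
  by_contra! hxt
  have hu0 : u ≠ 0 := norm_ne_zero_iff.1 (hu ▸ one_ne_zero)
  by_cases hlow : ∃ y ∈ K, ⟪y, u⟫ < ⟪x, u⟫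
  · obtain ⟨y, hyK, hyx⟩ := hlow
    linarith [hcap u hu, setIntegral_inter_le_inner_lt hE hKcomp.isBounded
      hKcomp.isClosed.measurableSet hKconv hKint hφ hφ0 hU hUK hφU hyK hxK hyx hxt]
  · push Not at hlow
    have hzero := setIntegral_inter_inner_neg_le_eq_zero (μ := volume) (φ := φ) hu0 hlow
    linarith [hcap (-u) (by rwa [norm_neg])]

end FloatingBody

/-- If the continuous nonnegative weight `φ` is strictly positive on an open neighborhood of
`∂K`, then the weighted floating body `K_δ^φ` equals the closed `δ`-superlevel set of the
minimal cap density. -/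
theorem weightedFloatingBody_eq_superlevel (d : ℕ) (hd : 2 ≤ d)
    (K : Set (EuclideanSpace ℝ (Fin d))) (hKcomp : IsCompact K) (hKconv : Convex ℝ K)
    (hKint : (interior K).Nonempty)
    (φ : EuclideanSpace ℝ (Fin d) → ℝ) (hφcont : ContinuousOn φ K)
    (hφpos : ∀ x ∈ K, 0 ≤ φ x)
    (U : Set (EuclideanSpace ℝ (Fin d))) (hU : IsOpen U) (hUK : frontier K ⊆ U)
    (hφU : ∀ x ∈ U ∩ K, 0 < φ x)
    (δ : ℝ) (hδ : 0 < δ) :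
    weightedFloatingBody K φ δ = {x ∈ K | δ ≤ minimalCapDensity K φ x} := by
  have : NeZero d := ⟨by omega⟩
  have hφ : IntegrableOn φ K := hφcont.integrableOn_compact hKcomp
  exact (weightedFloatingBody_subset_superlevel hKcomp.isClosed hKconv
    (hKint.mono interior_subset) hφ hφpos hδ.le).antisymm
    (superlevel_subset_weightedFloatingBody hd hKcomp hKconv hKint hφ hφpos hU hUK hφU hδ)
end

section
/- Let K ⊂ ℝ^d be a convex body that admits a rolling ball of radius r > 0 (i.e., every boundary point is contained in some Euclidean ball of radius r contained in K), let φ : K → (0,∞) be integrable with α := inf_K φ > 0, and let K_δ^φ denote the φ-weighted floating body. Then there exist δ₀ = δ₀(d,r,α) > 0 and C = C(d,r,α) > 0 such that for all δ ∈ (0,δ₀) and almost every unit vector u, the support functions satisfy 0 ≤ h_K(u) − h_{K_δ^φ}(u) ≤ C·δ^{2/(d+1)}. -/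
/-!
The support point `x` of `K` in direction `u` lies on `∂K`, so some ball `B(c, r) ⊆ K` contains
`x`. Every cap of depth `s` of that ball contains an ellipsoid with half-axes `s / 2` and
`√(r s) / 2`, of volume `≍ s ^ ((d + 1) / 2)`; as soon as `α` times this volume exceeds `δ`, no
half-space of `φ`-weight at most `δ` meets the inner ball `B(c, r - s)`, which therefore lies in
`K_δ^φ`. Hence `h_{K_δ^φ}(u) ≥ ⟪c, u⟫ + r - s ≥ h_K(u) - s`, and `s ≍ δ ^ (2 / (d + 1))`.
Conversely every half-space strictly beyond the supporting hyperplane misses `K`, so it has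
weight `0 ≤ δ`, whence `h_{K_δ^φ}(u) ≤ h_K(u)`.
-/

open MeasureTheory Metric Module
open scoped RealInnerProductSpace

/-- The support function `h_K(u) = sup {x·u : x ∈ K}`. -/
noncomputable def suppFn {d : ℕ} (K : Set (EuclideanSpace ℝ (Fin d)))
    (u : EuclideanSpace ℝ (Fin d)) : ℝ :=
  sSup ((fun x => ⟪x, u⟫) '' K)

lemma half_mul_sqrt_mul_div_two_pow {r s : ℝ} (hr : 0 ≤ r) (hs : 0 ≤ s) {d : ℕ} (hd : 1 ≤ d) :
    s / 2 * (√(r * s) / 2) ^ (d - 1) = √r ^ (d - 1) / 2 ^ d * s ^ (((d : ℝ) + 1) / 2) := by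
  have hpow : s ^ (((d : ℝ) + 1) / 2) = √s ^ (d + 1) := by
    rw [Real.sqrt_eq_rpow, ← Real.rpow_natCast, ← Real.rpow_mul hs]
    push_cast; ring_nf
  obtain ⟨n, rfl⟩ := Nat.exists_eq_add_of_le' hd
  rw [hpow, Nat.add_sub_cancel, Real.sqrt_mul hr, pow_succ √s (n + 1), pow_succ √s n,
    mul_assoc (√s ^ n), Real.mul_self_sqrt hs, div_pow, mul_pow]
  ring

lemma exists_mul_rpow_le_and_lt_mul_rpow_inv {β r e : ℝ} (hβ : 0 < β) (hr : 0 < r)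
    (he : 0 < e) :
    ∃ δ₀ > (0 : ℝ), ∃ C > (0 : ℝ), ∀ δ : ℝ, 0 < δ → δ < δ₀ →
      C * δ ^ e ≤ r ∧ δ < β * (C * δ ^ e) ^ e⁻¹ := by
  refine ⟨(r / (2 / β) ^ e) ^ e⁻¹, by positivity, (2 / β) ^ e, by positivity,
    fun δ hδ hδ₀ => ⟨?_, ?_⟩⟩
  · calc (2 / β) ^ e * δ ^ e ≤ (2 / β) ^ e * ((r / (2 / β) ^ e) ^ e⁻¹) ^ e := by
          gcongr
      _ = r := by
          rw [Real.rpow_inv_rpow (by positivity) he.ne', mul_div_cancel₀ _ (by positivity)]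
  · rw [Real.mul_rpow (by positivity) (by positivity), Real.rpow_rpow_inv (by positivity) he.ne',
      Real.rpow_rpow_inv hδ.le he.ne']
    field_simp
    linarith

section InnerProductSpace

variable {E : Type*} [NormedAddCommGroup E] [InnerProductSpace ℝ E]

noncomputable def axialScaling (v : E) (a b : ℝ) : E →ₗ[ℝ] E :=
  b • LinearMap.id + (a - b) • (LinearMap.toSpanSingleton ℝ E v ∘ₗ (innerSL ℝ v).toLinearMap)

lemma axialScaling_apply (v : E) (a b : ℝ) (x : E) :
    axialScaling v a b x = b • x + (a - b) • ⟪v, x⟫ • v := by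
  simp [axialScaling, LinearMap.toSpanSingleton_apply]

lemma det_axialScaling [FiniteDimensional ℝ E] {v : E} (hv : ‖v‖ = 1) (a b : ℝ) :
    LinearMap.det (axialScaling v a b) = a * b ^ (finrank ℝ E - 1) := by
  obtain ⟨n, hn⟩ : ∃ n, finrank ℝ E = n + 1 :=
    Nat.exists_eq_add_one.mpr
      (finrank_pos_iff_exists_ne_zero.mpr ⟨v, by simp [← norm_ne_zero_iff, hv]⟩)
  have hv_orth : Orthonormal ℝ (({0} : Set (Fin (n + 1))).domRestrict fun _ => v) :=
    ⟨fun _ => hv, fun i j hij => absurd (Subsingleton.elim i j) hij⟩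
  obtain ⟨β, hβ⟩ := hv_orth.exists_orthonormalBasis_extension_of_card_eq (by simp [hn])
  have hβ0 : β 0 = v := hβ 0 rfl
  have hβ_eigen : ∀ j, axialScaling v a b (β j) = (if j = 0 then a else b) • β j := by
    intro j
    rcases eq_or_ne j 0 with rfl | hj
    · simp [axialScaling_apply, hβ0, hv]
      module
    · have : ⟪v, β j⟫ = 0 := hβ0 ▸ β.orthonormal.2 (Ne.symm hj)
      simp [axialScaling_apply, this, hj]
  have hdiag : axialScaling v a b
      = Matrix.toLin β.toBasis β.toBasis (.diagonal fun j => if j = 0 then a else b) :=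
    β.toBasis.ext fun j => by
      rw [Matrix.toLin_self, OrthonormalBasis.coe_toBasis, hβ_eigen]
      simp [Matrix.diagonal_apply]
  simp [hdiag, LinearMap.det_toLin, Matrix.det_diagonal, Fin.prod_univ_succ, hn]

/-- An ellipsoid inside the cap of depth `s` of `closedBall c r` in direction `v`: half-axis
`s / 2` along `v` and `√(r s) / 2` across, so that its volume is of order `s ^ ((d + 1) / 2)`. -/
noncomputable def capEllipsoid (c v : E) (r s : ℝ) : Set E :=
  (fun x => c + (r - s / 2) • v + axialScaling v (s / 2) (√(r * s) / 2) x) '' closedBall 0 1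

lemma capEllipsoid_subset {c v : E} (hv : ‖v‖ = 1) {r s : ℝ} (hs : 0 ≤ s) (hsr : s ≤ r) :
    capEllipsoid c v r s ⊆ closedBall c r ∩ {y | ⟪c, v⟫ + (r - s) ≤ ⟪y, v⟫} := by
  rintro _ ⟨x, hx, rfl⟩
  rw [mem_closedBall_zero_iff] at hx
  set ξ := ⟪v, x⟫
  set w := x - ξ • v
  have hvv : ⟪v, v⟫ = 1 := by simp [hv]
  have hvw : ⟪v, w⟫ = 0 := by
    rw [inner_sub_right, real_inner_smul_right, hvv, mul_one, sub_self]
  have hwv : ⟪w, v⟫ = 0 := by rw [real_inner_comm, hvw]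
  have hξ : |ξ| ≤ 1 := (abs_real_inner_le_norm v x).trans (by rwa [hv, one_mul])
  have hw : ‖w‖ ^ 2 ≤ 1 - ξ ^ 2 := by
    have hx2 : ‖x‖ ^ 2 = ξ ^ 2 + ‖w‖ ^ 2 := by
      rw [show x = ξ • v + w by module, norm_add_sq_real]
      simp [norm_smul, hv, real_inner_smul_left, hvw]
    nlinarith [norm_nonneg x]
  obtain ⟨hξl, hξu⟩ := abs_le.mp hξ
  set b := √(r * s) / 2
  have hb : b ^ 2 = r * s / 4 := by
    rw [div_pow, Real.sq_sqrt (mul_nonneg (hs.trans hsr) hs)]; norm_num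
  have hdecomp : c + (r - s / 2) • v + axialScaling v (s / 2) b x
      = c + ((r - s / 2 + s / 2 * ξ) • v + b • w) := by
    rw [axialScaling_apply]; module
  simp only [hdecomp]
  constructor
  · rw [mem_closedBall, dist_eq_norm, add_sub_cancel_left,
      ← sq_le_sq₀ (norm_nonneg _) (by linarith), norm_add_sq_real]
    simp only [norm_smul, mul_pow, hv, Real.norm_eq_abs, sq_abs, real_inner_smul_left,
      real_inner_smul_right, hvw, hb]
    nlinarith [mul_le_mul_of_nonneg_left hw (by nlinarith : 0 ≤ r * s / 4),
      mul_nonneg (mul_nonneg hs (sub_nonneg.2 hξu)) (by nlinarith : 0 ≤ 3 * r - s - (r - s) * ξ)]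
  · simp only [Set.mem_ofPred_eq, inner_add_left, real_inner_smul_left, hvv, hwv]
    nlinarith

lemma mem_frontier_of_isMaxOn_inner {K : Set E} {u x : E} (hu : u ≠ 0) (hx : x ∈ K)
    (hmax : IsMaxOn (⟪·, u⟫) K x) : x ∈ frontier K := by
  refine ⟨subset_closure hx, fun hint => hu ?_⟩
  have hderiv : HasFDerivAt (⟪·, u⟫) (innerSL ℝ u) x := by
    convert (innerSL ℝ u).hasFDerivAt using 1
    ext y
    simp [real_inner_comm]
  have h0 := congrArg (· u) <|
    (hmax.isLocalMax (mem_interior_iff_mem_nhds.mp hint)).hasFDerivAt_eq_zero hderiv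
  simpa using h0

variable [FiniteDimensional ℝ E] [MeasurableSpace E] [BorelSpace E] (μ : Measure E)
  [μ.IsAddHaarMeasure]

lemma addHaar_capEllipsoid (c : E) {v : E} (hv : ‖v‖ = 1) (r : ℝ) {s : ℝ} (hs : 0 ≤ s) :
    μ (capEllipsoid c v r s)
      = ENNReal.ofReal (s / 2 * (√(r * s) / 2) ^ (finrank ℝ E - 1)) * μ (closedBall 0 1) := by
  rw [capEllipsoid, ← Set.image_image (c + (r - s / 2) • v + ·), Set.image_add_left,
    measure_preimage_add, Measure.addHaar_image_linearMap, det_axialScaling hv,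
    abs_of_nonneg (by positivity)]

lemma le_addHaar_closedBall_inter_halfSpace (c : E) {v : E} (hv : ‖v‖ = 1) {r s : ℝ}
    (hs : 0 ≤ s) (hsr : s ≤ r) :
    ENNReal.ofReal (s / 2 * (√(r * s) / 2) ^ (finrank ℝ E - 1)) * μ (closedBall 0 1)
      ≤ μ (closedBall c r ∩ {y | ⟪c, v⟫ + (r - s) ≤ ⟪y, v⟫}) := by
  rw [← addHaar_capEllipsoid μ c hv r hs]
  exact measure_mono (capEllipsoid_subset hv hs hsr)

lemma mul_le_setIntegral_halfSpace {K : Set E} (hK : MeasurableSet K) (hKμ : μ K ≠ ⊤)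
    {φ : E → ℝ} (hφ : IntegrableOn φ K μ) {α : ℝ} (hα : 0 ≤ α) (hαφ : ∀ x ∈ K, α ≤ φ x)
    {c : E} {r : ℝ} (hcK : closedBall c r ⊆ K) {v : E} (hv : ‖v‖ = 1) {s : ℝ} (hs : 0 ≤ s)
    (hsr : s ≤ r) {t : ℝ} (ht : t ≤ ⟪c, v⟫ + (r - s)) :
    α * (s / 2 * (√(r * s) / 2) ^ (finrank ℝ E - 1) * μ.real (closedBall 0 1))
      ≤ ∫ y in K ∩ {y | t ≤ ⟪y, v⟫}, φ y ∂μ := by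
  set H := K ∩ {y | t ≤ ⟪y, v⟫}
  have hHμ : μ H ≠ ⊤ := ((measure_mono Set.inter_subset_left).trans_lt hKμ.lt_top).ne
  have hH : MeasurableSet H :=
    hK.inter (measurableSet_le measurable_const (continuous_id.inner continuous_const).measurable)
  have hcapH : closedBall c r ∩ {y | ⟪c, v⟫ + (r - s) ≤ ⟪y, v⟫} ⊆ H :=
    fun y hy => ⟨hcK hy.1, ht.trans hy.2⟩
  have hcap :
      s / 2 * (√(r * s) / 2) ^ (finrank ℝ E - 1) * μ.real (closedBall 0 1) ≤ μ.real H := by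
    have := (le_addHaar_closedBall_inter_halfSpace μ c hv hs hsr).trans (measure_mono hcapH)
    rwa [← ENNReal.toReal_le_toReal (this.trans_lt hHμ.lt_top).ne hHμ, ENNReal.toReal_mul,
      ENNReal.toReal_ofReal (by positivity)] at this
  calc _ ≤ α * μ.real H := mul_le_mul_of_nonneg_left hcap hα
    _ ≤ _ := setIntegral_ge_of_const_le_real hH hHμ (fun y hy => hαφ y hy.1)
        (hφ.mono_set Set.inter_subset_left)

end InnerProductSpace

section FloatingBody

variable {d : ℕ} {K : Set (EuclideanSpace ℝ (Fin d))} {φ : EuclideanSpace ℝ (Fin d) → ℝ}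
  {δ : ℝ}

lemma mem_weightedFloatingBody_iff {y : EuclideanSpace ℝ (Fin d)} :
    y ∈ weightedFloatingBody K φ δ ↔
      ∀ u, ‖u‖ = 1 → ∀ t, ∫ y in K ∩ {y | t ≤ ⟪y, u⟫}, φ y ≤ δ → ⟪y, u⟫ ≤ t := by
  simp [weightedFloatingBody]

lemma inner_le_of_mem_weightedFloatingBody (hδ : 0 ≤ δ) {u : EuclideanSpace ℝ (Fin d)}
    (hu : ‖u‖ = 1) {h : ℝ} (hK : ∀ x ∈ K, ⟪x, u⟫ ≤ h) {y : EuclideanSpace ℝ (Fin d)}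
    (hy : y ∈ weightedFloatingBody K φ δ) : ⟪y, u⟫ ≤ h := by
  refine le_of_forall_gt_imp_ge_of_dense fun t ht =>
    mem_weightedFloatingBody_iff.mp hy u hu t ?_
  have hempty : K ∩ {y | t ≤ ⟪y, u⟫} = ∅ :=
    Set.eq_empty_of_forall_notMem fun x hx => (hK x hx.1).not_gt (ht.trans_le hx.2)
  simpa [hempty] using hδ

lemma closedBall_subset_weightedFloatingBody (hK : MeasurableSet K) (hKvol : volume K ≠ ⊤)
    (hφ : IntegrableOn φ K) {α : ℝ} (hα : 0 ≤ α) (hαφ : ∀ x ∈ K, α ≤ φ x)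
    {c : EuclideanSpace ℝ (Fin d)} {r : ℝ} (hcK : closedBall c r ⊆ K) {s : ℝ} (hs : 0 ≤ s)
    (hsr : s ≤ r) (hδ : δ < α * (s / 2 * (√(r * s) / 2) ^ (d - 1)
      * volume.real (closedBall (0 : EuclideanSpace ℝ (Fin d)) 1))) :
    closedBall c (r - s) ⊆ weightedFloatingBody K φ δ := by
  intro z hz
  rw [mem_weightedFloatingBody_iff]
  intro v hv t hδt
  by_contra! htz
  have hzv : ⟪z, v⟫ ≤ ⟪c, v⟫ + (r - s) := by
    have := real_inner_le_norm (z - c) v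
    rw [hv, mul_one, inner_sub_left, ← dist_eq_norm] at this
    linarith [mem_closedBall.mp hz]
  have := mul_le_setIntegral_halfSpace volume hK hKvol hφ hα hαφ hcK hv hs hsr (htz.le.trans hzv)
  rw [finrank_euclideanSpace_fin] at this
  linarith

lemma suppFn_eq_of_isMaxOn {u x : EuclideanSpace ℝ (Fin d)} (hx : x ∈ K)
    (hmax : IsMaxOn (⟪·, u⟫) K x) : suppFn K u = ⟪x, u⟫ :=
  IsGreatest.csSup_eq ⟨⟨x, hx, rfl⟩, by rintro _ ⟨y, hy, rfl⟩; exact hmax hy⟩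

lemma suppFn_sub_suppFn_weightedFloatingBody_mem_Icc (hK : IsCompact K) (hKne : K.Nonempty)
    {r : ℝ} (hroll : ∀ x ∈ frontier K, ∃ y, x ∈ closedBall y r ∧ closedBall y r ⊆ K)
    (hφ : IntegrableOn φ K) {α : ℝ} (hα : 0 ≤ α) (hαφ : ∀ x ∈ K, α ≤ φ x) {s : ℝ}
    (hs : 0 ≤ s) (hsr : s ≤ r) (hδ₀ : 0 ≤ δ) (hδ : δ < α * (s / 2 * (√(r * s) / 2) ^ (d - 1)
      * volume.real (closedBall (0 : EuclideanSpace ℝ (Fin d)) 1)))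
    {u : EuclideanSpace ℝ (Fin d)} (hu : ‖u‖ = 1) :
    suppFn K u - suppFn (weightedFloatingBody K φ δ) u ∈ Set.Icc 0 s := by
  obtain ⟨x, hxK, hmax⟩ :=
    hK.exists_isMaxOn hKne
      (continuous_id.inner continuous_const : Continuous (⟪·, u⟫)).continuousOn
  obtain ⟨c, hxc, hcK⟩ :=
    hroll x (mem_frontier_of_isMaxOn_inner (norm_ne_zero_iff.mp (by simp [hu])) hxK hmax)
  have hbound : ∀ y ∈ weightedFloatingBody K φ δ, ⟪y, u⟫ ≤ ⟪x, u⟫ :=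
    fun y hy => inner_le_of_mem_weightedFloatingBody hδ₀ hu hmax hy
  set z := c + (r - s) • u
  have hz : z ∈ weightedFloatingBody K φ δ :=
    closedBall_subset_weightedFloatingBody hK.measurableSet hK.measure_lt_top.ne hφ hα hαφ hcK
      hs hsr hδ (by simp [z, norm_smul, hu, abs_of_nonneg (sub_nonneg.2 hsr)])
  have hxz : ⟪x, u⟫ - s ≤ ⟪z, u⟫ := by
    have := real_inner_le_norm (x - c) u
    rw [hu, mul_one, inner_sub_left, ← dist_eq_norm] at this
    simp only [z, inner_add_left, real_inner_smul_left, real_inner_self_eq_norm_sq, hu]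
    linarith [mem_closedBall.mp hxc]
  have hle : suppFn (weightedFloatingBody K φ δ) u ≤ ⟪x, u⟫ :=
    csSup_le ⟨_, z, hz, rfl⟩ (by rintro _ ⟨y, hy, rfl⟩; exact hbound y hy)
  have hge : ⟪z, u⟫ ≤ suppFn (weightedFloatingBody K φ δ) u :=
    le_csSup ⟨⟪x, u⟫, by rintro _ ⟨y, hy, rfl⟩; exact hbound y hy⟩ ⟨z, hz, rfl⟩
  rw [suppFn_eq_of_isMaxOn hxK hmax]
  constructor <;> linarith

end FloatingBody

theorem weightedFloatingBody_suppFn_rate_general (d : ℕ) (hd : 2 ≤ d)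
    (K : Set (EuclideanSpace ℝ (Fin d))) (hKcomp : IsCompact K)
    (hKint : (interior K).Nonempty)
    (r : ℝ) (hr : 0 < r)
    (hroll : ∀ x ∈ frontier K, ∃ y, x ∈ Metric.closedBall y r ∧ Metric.closedBall y r ⊆ K)
    (φ : EuclideanSpace ℝ (Fin d) → ℝ) (hφint : IntegrableOn φ K)
    (hφpos : 0 < sInf (φ '' K)) :
    ∃ δ₀ > (0 : ℝ), ∃ C > (0 : ℝ), ∀ δ : ℝ, 0 < δ → δ < δ₀ →
      ∀ᵐ u ∂(μH[((d : ℝ) - 1)].restrict (Metric.sphere (0 : EuclideanSpace ℝ (Fin d)) 1)),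
        0 ≤ suppFn K u - suppFn (weightedFloatingBody K φ δ) u ∧
        suppFn K u - suppFn (weightedFloatingBody K φ δ) u ≤ C * δ ^ (2 / ((d : ℝ) + 1)) := by
  have hφbdd : BddBelow (φ '' K) := by
    by_contra h
    simp [Real.sInf_of_not_bddBelow h] at hφpos
  set α := sInf (φ '' K)
  have hαφ : ∀ x ∈ K, α ≤ φ x := fun x hx => csInf_le hφbdd ⟨x, hx, rfl⟩
  have hκ : 0 < volume.real (closedBall (0 : EuclideanSpace ℝ (Fin d)) 1) :=
    ENNReal.toReal_pos (measure_closedBall_pos _ _ one_pos).ne' measure_closedBall_lt_top.ne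
  obtain ⟨δ₀, hδ₀, C, hC, hrate⟩ := exists_mul_rpow_le_and_lt_mul_rpow_inv
    (β := α * volume.real (closedBall (0 : EuclideanSpace ℝ (Fin d)) 1) * √r ^ (d - 1) / 2 ^ d)
    (by positivity) hr (e := 2 / ((d : ℝ) + 1)) (by positivity)
  refine ⟨δ₀, hδ₀, C, hC, fun δ hδ hδδ₀ => ae_restrict_of_forall_mem isClosed_sphere.measurableSet
    fun u hu => ?_⟩
  obtain ⟨hsr, hδs⟩ := hrate δ hδ hδδ₀
  have hs : 0 ≤ C * δ ^ (2 / ((d : ℝ) + 1)) := by positivity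
  refine suppFn_sub_suppFn_weightedFloatingBody_mem_Icc hKcomp (hKint.mono interior_subset) hroll
    hφint hφpos.le hαφ hs hsr hδ.le ?_ (by simpa using hu)
  rw [half_mul_sqrt_mul_div_two_pow hr.le hs (by omega)]
  rw [inv_div] at hδs
  exact hδs.trans_eq (by ring)

/-- Uniform convergence rate for the weighted floating body of a body admitting a rolling
ball: there are `δ₀, C > 0` (depending on `d`, `r` and `α = inf_K φ`) such that for all
`δ ∈ (0,δ₀)` and almost every unit direction `u`,
`0 ≤ h_K(u) − h_{K_δ^φ}(u) ≤ C δ^{2/(d+1)}`. -/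
theorem weightedFloatingBody_suppFn_rate (d : ℕ) (hd : 2 ≤ d)
    (K : Set (EuclideanSpace ℝ (Fin d))) (hKcomp : IsCompact K) (hKconv : Convex ℝ K)
    (hKint : (interior K).Nonempty)
    (r : ℝ) (hr : 0 < r)
    (hroll : ∀ x ∈ frontier K, ∃ y, x ∈ Metric.closedBall y r ∧ Metric.closedBall y r ⊆ K)
    (φ : EuclideanSpace ℝ (Fin d) → ℝ) (hφint : IntegrableOn φ K)
    (hφpos : 0 < sInf (φ '' K)) :
    ∃ δ₀ > (0 : ℝ), ∃ C > (0 : ℝ), ∀ δ : ℝ, 0 < δ → δ < δ₀ →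
      ∀ᵐ u ∂(μH[((d : ℝ) - 1)].restrict (Metric.sphere (0 : EuclideanSpace ℝ (Fin d)) 1)),
        0 ≤ suppFn K u - suppFn (weightedFloatingBody K φ δ) u ∧
        suppFn K u - suppFn (weightedFloatingBody K φ δ) u ≤ C * δ ^ (2 / ((d : ℝ) + 1)) :=
  weightedFloatingBody_suppFn_rate_general d hd K hKcomp hKint r hr hroll φ hφint hφpos
end
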